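/- Let G = ⟨(ACGT),(AG)⟩ ≤ Sym({A,C,G,T}) be the Kimura 2-parameter group of order 8, acting diagonally on B^n with B = {A,C,G,T}. If X ∈ B^n does not lie in B_{AG|CT} = {A,G}^n ∪ {C,T}^n, then the G-orbit of X has exactly 8 elements. Consequently the number of G-orbits meeting B^n \ B_{AG|CT} is (4^n − 2^{n+1})/8 = 2^{2n-3} − 2^{n-2} for n ≥ 2. -/

import Mathlib

/-!
The Kimura group is exactly the group of permutations of {A, C, G, T} preserving the partition
{A, G} | {C, T} (purines | pyrimidines). Hence it maps words containing both a purine and a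
pyrimidine to such words, and since only the identity fixes a purine and a pyrimidine at the
same time, it acts freely on them. So every orbit outside `B_{AG|CT}` has `|G| = 8` elements,
and the `4^n - 2^(n+1)` words there split into `(4^n - 2^(n+1))/8` orbits.
-/

/-- The dihedral group of order 8 of the Kimura 2-parameter model,
generated by (ACGT) and (AG); A=0, C=1, G=2, T=3. -/
def k80Group : Subgroup (Equiv.Perm (Fin 4)) :=
  Subgroup.closure {finRotate 4, Equiv.swap 0 2}

/-- The set of `n`-words with all letters in a given subset of {A,C,G,T}. -/
def wordsIn (n : ℕ) (S : Set (Fin 4)) : Set (Fin n → Fin 4) := {X | ∀ i, X i ∈ S}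

open Equiv MulAction

namespace MulAction

variable {G α : Type*} [Group G] [MulAction G α]

theorem card_orbit_of_stabilizer_eq_bot {x : α} (h : stabilizer G x = ⊥) :
    Nat.card (orbit G x) = Nat.card G := by
  rw [Nat.card_coe_set_eq, ← index_stabilizer, h, Subgroup.index_bot]

theorem card_orbits_meeting_mul_eq_card [Finite α] {s : Set α} (hs : ∀ g : G, ∀ x ∈ s, g • x ∈ s)
    {k : ℕ} (hk : ∀ x ∈ s, Nat.card (orbit G x) = k) :
    Nat.card {o : Quotient (orbitRel G α) // ∃ x ∈ s, Quotient.mk (orbitRel G α) x = o} * k =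
      Nat.card s := by
  set O := {o : Quotient (orbitRel G α) // ∃ x ∈ s, Quotient.mk (orbitRel G α) x = o}
  have := Fintype.ofFinite O
  let f : s → O := fun x => ⟨_, x, x.2, rfl⟩
  have hfiber : ∀ o, Nat.card {x // f x = o} = k := by
    rintro ⟨_, x, hx, rfl⟩
    have hsame : ∀ y : s, f y = f ⟨x, hx⟩ ↔ (y : α) ∈ orbit G x := fun y =>
      Subtype.ext_iff.trans (Quotient.eq.trans orbitRel_apply)
    rw [← hk x hx, Nat.card_congr ((subtypeEquivRight hsame).trans
      (subtypeSubtypeEquivSubtype fun {y} ⟨g, hg⟩ => hg ▸ hs g x hx))]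
  rw [← Nat.card_congr (sigmaFiberEquiv f), Nat.card_sigma, Finset.sum_congr rfl fun o _ => hfiber o,
    Finset.sum_const, smul_eq_mul, Finset.card_univ, Nat.card_eq_fintype_card]

end MulAction

namespace Equiv.Perm

variable {α β : Type*}

def partitionStabilizer (f : α → β) : Subgroup (Perm α) where
  carrier := {g | ∀ a b, f (g a) = f (g b) ↔ f a = f b}
  one_mem' _ _ := Iff.rfl
  mul_mem' hg hh a b := (hg _ _).trans (hh a b)
  inv_mem' {g} hg a b := by simpa using (hg (g⁻¹ a) (g⁻¹ b)).symm

theorem mem_partitionStabilizer {f : α → β} {g : Perm α} :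
    g ∈ partitionStabilizer f ↔ ∀ a b, f (g a) = f (g b) ↔ f a = f b :=
  Iff.rfl

instance [Fintype α] [DecidableEq β] (f : α → β) : DecidablePred (· ∈ partitionStabilizer f) :=
  fun g => inferInstanceAs (Decidable (∀ a b, f (g a) = f (g b) ↔ f a = f b))

end Equiv.Perm

open Equiv.Perm

def isPyrimidine (a : Fin 4) : Bool := a.val % 2 == 1

theorem k80Group_eq_partitionStabilizer : k80Group = partitionStabilizer isPyrimidine := by
  apply le_antisymm
  · rw [k80Group, Subgroup.closure_le]
    rintro g (rfl | rfl) <;> rw [SetLike.mem_coe] <;> decide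
  · intro g hg
    have hr : finRotate 4 ∈ k80Group := Subgroup.subset_closure (by simp)
    have hs : swap 0 2 ∈ k80Group := Subgroup.subset_closure (by simp)
    have : g ∈ ({1, finRotate 4, finRotate 4 ^ 2, finRotate 4 ^ 3, swap 0 2, swap 0 2 * finRotate 4,
        swap 0 2 * finRotate 4 ^ 2, swap 0 2 * finRotate 4 ^ 3} : Finset (Perm (Fin 4))) := by
      revert g; decide
    simp only [Finset.mem_insert, Finset.mem_singleton] at this
    rcases this with rfl | rfl | rfl | rfl | rfl | rfl | rfl | rfl
    exacts [one_mem _, hr, pow_mem hr 2, pow_mem hr 3, hs, mul_mem hs hr, mul_mem hs (pow_mem hr 2),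
      mul_mem hs (pow_mem hr 3)]

theorem card_k80Group : Nat.card k80Group = 8 := by
  rw [k80Group_eq_partitionStabilizer, Nat.card_eq_fintype_card]
  decide

theorem eq_one_of_mem_k80Group_of_fixes {g : Perm (Fin 4)} (hg : g ∈ k80Group) {a b : Fin 4}
    (hab : isPyrimidine a ≠ isPyrimidine b) (ha : g a = a) (hb : g b = b) : g = 1 := by
  rw [k80Group_eq_partitionStabilizer] at hg
  revert g a b
  decide

theorem notMem_wordsIn_union_iff {n : ℕ} {X : Fin n → Fin 4} :
    X ∉ wordsIn n {0, 2} ∪ wordsIn n {1, 3} ↔ ∃ i j, isPyrimidine (X i) ≠ isPyrimidine (X j) := by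
  have hAG : ∀ a : Fin 4, a ∈ ({0, 2} : Set (Fin 4)) ↔ isPyrimidine a = false := by decide
  have hCT : ∀ a : Fin 4, a ∈ ({1, 3} : Set (Fin 4)) ↔ isPyrimidine a = true := by decide
  simp only [wordsIn, Set.mem_union, Set.mem_ofPred_eq, hAG, hCT, not_or, not_forall,
    Bool.not_eq_false, Bool.not_eq_true]
  constructor
  · rintro ⟨⟨i, hi⟩, ⟨j, hj⟩⟩
    exact ⟨i, j, by rw [hi, hj]; decide⟩
  · rintro ⟨i, j, hij⟩
    have hj := Bool.eq_not_iff.2 (Ne.symm hij)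
    cases hi : isPyrimidine (X i) <;> rw [hi] at hj
    exacts [⟨⟨j, hj⟩, ⟨i, hi⟩⟩, ⟨⟨i, hi⟩, ⟨j, hj⟩⟩]

theorem smul_notMem_wordsIn_union {n : ℕ} {X : Fin n → Fin 4}
    (hX : X ∉ wordsIn n {0, 2} ∪ wordsIn n {1, 3}) (g : k80Group) :
    g • X ∉ wordsIn n {0, 2} ∪ wordsIn n {1, 3} := by
  obtain ⟨i, j, hij⟩ := notMem_wordsIn_union_iff.1 hX
  have hg : (g : Perm (Fin 4)) ∈ partitionStabilizer isPyrimidine :=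
    k80Group_eq_partitionStabilizer ▸ g.2
  exact notMem_wordsIn_union_iff.2 ⟨i, j, mt (mem_partitionStabilizer.1 hg _ _).1 hij⟩

theorem stabilizer_k80Group_eq_bot {n : ℕ} {X : Fin n → Fin 4}
    (hX : X ∉ wordsIn n {0, 2} ∪ wordsIn n {1, 3}) : stabilizer k80Group X = ⊥ := by
  obtain ⟨i, j, hij⟩ := notMem_wordsIn_union_iff.1 hX
  refine (Subgroup.eq_bot_iff_forall _).2 fun g hg => Subtype.ext ?_
  have hfix : ∀ k, (g : Perm (Fin 4)) (X k) = X k := congrFun (mem_stabilizer_iff.1 hg)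
  exact eq_one_of_mem_k80Group_of_fixes g.2 hij (hfix i) (hfix j)

theorem ncard_wordsIn (n : ℕ) (S : Set (Fin 4)) : (wordsIn n S).ncard = S.ncard ^ n := by
  have h : Nat.card (wordsIn n S) = Nat.card (Fin n → S) := Nat.card_congr subtypePiEquivPi
  rw [← Nat.card_coe_set_eq, ← Nat.card_coe_set_eq, h, Nat.card_fun, Nat.card_fin]

theorem disjoint_wordsIn {n : ℕ} (hn : n ≠ 0) {S T : Set (Fin 4)} (h : Disjoint S T) :
    Disjoint (wordsIn n S) (wordsIn n T) :=
  Set.disjoint_left.2 fun _ hS hT => Set.disjoint_left.1 h (hS ⟨0, by omega⟩) (hT ⟨0, by omega⟩)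

theorem card_compl_wordsIn_union {n : ℕ} (hn : n ≠ 0) :
    Nat.card ↥(wordsIn n {0, 2} ∪ wordsIn n {1, 3})ᶜ = 4 ^ n - 2 ^ (n + 1) := by
  rw [Nat.card_coe_set_eq, Set.ncard_compl,
    Set.ncard_union_eq (disjoint_wordsIn hn (Set.disjoint_left.2 (by decide))), ncard_wordsIn,
    ncard_wordsIn, Set.ncard_pair (by decide), Set.ncard_pair (by decide)]
  simp [pow_succ, mul_two]

theorem four_pow_sub_two_pow_succ_div_eight (n : ℕ) :
    (4 ^ n - 2 ^ (n + 1)) / 8 = 2 ^ (2 * n - 3) - 2 ^ (n - 2) := by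
  match n with
  | 0 | 1 => rfl
  | m + 2 =>
    have h : 4 ^ (m + 2) - 2 ^ (m + 2 + 1) = 8 * (2 ^ (2 * m + 1) - 2 ^ m) := by
      rw [Nat.mul_sub, show 4 = 2 ^ 2 from rfl, ← pow_mul]
      ring_nf
    rw [h, Nat.mul_div_cancel_left _ (by norm_num), show 2 * (m + 2) - 3 = 2 * m + 1 by omega,
      Nat.add_sub_cancel]

/-- Words outside `B_{AG|CT} = {A,G}^n ∪ {C,T}^n` have a free K80-orbit of
cardinality 8, and for `n ≥ 2` the number of K80-orbits meeting the complement
of `B_{AG|CT}` is `(4^n − 2^(n+1))/8 = 2^(2n-3) − 2^(n-2)`. -/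
theorem k80_orbits_outside_BAGCT (n : ℕ) (hn : 2 ≤ n) :
    (∀ X : Fin n → Fin 4, X ∉ wordsIn n {0, 2} ∪ wordsIn n {1, 3} →
        Nat.card (MulAction.orbit k80Group X) = 8) ∧
      Nat.card {o : Quotient (MulAction.orbitRel k80Group (Fin n → Fin 4)) //
          ∃ X : Fin n → Fin 4, X ∉ wordsIn n {0, 2} ∪ wordsIn n {1, 3} ∧
            Quotient.mk (MulAction.orbitRel k80Group (Fin n → Fin 4)) X = o}
        = (4 ^ n - 2 ^ (n + 1)) / 8 ∧
      (4 ^ n - 2 ^ (n + 1)) / 8 = 2 ^ (2 * n - 3) - 2 ^ (n - 2) := by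
  have horbit : ∀ X : Fin n → Fin 4, X ∉ wordsIn n {0, 2} ∪ wordsIn n {1, 3} →
      Nat.card (orbit k80Group X) = 8 := fun X hX => by
    rw [card_orbit_of_stabilizer_eq_bot (stabilizer_k80Group_eq_bot hX), card_k80Group]
  refine ⟨horbit, ?_, four_pow_sub_two_pow_succ_div_eight n⟩
  have hcount := card_orbits_meeting_mul_eq_card (s := (wordsIn n {0, 2} ∪ wordsIn n {1, 3})ᶜ)
    (fun g _ hX => smul_notMem_wordsIn_union hX g) horbit
  rw [card_compl_wordsIn_union (by omega)] at hcount
  exact Nat.eq_div_of_mul_eq_left (by norm_num) hcount
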